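/- arXiv:2507.18737 — 2 statements merged into one kernel-verified Lean document; each statement's English description precedes it below -/
import Mathlib

section
/- For γ > 0 and α > 0, the constant η* := (1+α)/γ^{2+α} · (α²(1+γ)² + 1)/((α(1+γ)+1)³) is strictly positive, and equals (1+α) ∫₁^∞ (Ψ^{(1)}_{γ,1}(x))² ℓ_γ^{α−1}(x) dx, where Ψ^{(1)}_{γ,1}(x) = (1/γ³)(log x − γ)/x^{1+1/γ} and ℓ_γ(x) = γ^{-1}x^{-1-1/γ}. -/
/-!
Combining the powers of `x`, the integrand is `γ⁻⁶ γ^(1-α) (log x - γ)² x^(-(c+1))` with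
`c = (α(1+γ)+1)/γ`. The latter has the explicit primitive
`-x^(-c) ((log x - γ)²/c + 2(log x - γ)/c² + 2/c³)`, which vanishes at infinity, so the integral
over `(1, ∞)` is `γ²/c - 2γ/c² + 2/c³`; the claimed closed form is this value rearranged.
-/

open Real MeasureTheory Filter Topology

lemma tendsto_log_pow_mul_rpow_neg_atTop (n : ℕ) {c : ℝ} (hc : 0 < c) :
    Tendsto (fun x : ℝ => log x ^ n * x ^ (-c)) atTop (𝓝 0) := by
  refine ((tendsto_rpow_mul_exp_neg_mul_atTop_nhds_zero n c hc).comp tendsto_log_atTop).congr' ?_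
  filter_upwards [eventually_gt_atTop 0] with x hx
  rw [Function.comp_apply, rpow_natCast, rpow_def_of_pos hx]
  ring_nf

section LogSqPrimitive

variable (a c : ℝ)

noncomputable def logSubSqMulRpowPrimitive (x : ℝ) : ℝ :=
  -(x ^ (-c) * ((log x - a) ^ 2 / c + 2 * (log x - a) / c ^ 2 + 2 / c ^ 3))

variable {a c}

lemma hasDerivAt_logSubSqMulRpowPrimitive (hc : c ≠ 0) {x : ℝ} (hx : 0 < x) :
    HasDerivAt (logSubSqMulRpowPrimitive a c) ((log x - a) ^ 2 * x ^ (-(c + 1))) x := by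
  have hlog : HasDerivAt (fun y => log y - a) x⁻¹ x := (hasDerivAt_log hx.ne').sub_const a
  have hpoly := (((hlog.pow 2).div_const c).add ((hlog.const_mul 2).div_const (c ^ 2))).add_const
    (2 / c ^ 3)
  refine ((hasDerivAt_rpow_const (p := -c) (Or.inl hx.ne')).mul hpoly).neg.congr_deriv ?_
  have hsplit : x ^ (-c) = x ^ (-(c + 1)) * x := by
    rw [← rpow_add_one hx.ne']; ring_nf
  rw [show -c - 1 = -(c + 1) by ring, hsplit]
  simp only [Pi.add_apply, Pi.pow_apply]
  field_simp
  ring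

lemma tendsto_logSubSqMulRpowPrimitive_atTop (hc : 0 < c) :
    Tendsto (logSubSqMulRpowPrimitive a c) atTop (𝓝 0) := by
  have h := (((tendsto_log_pow_mul_rpow_neg_atTop 2 hc).const_mul (-(1 / c))).add
    ((tendsto_log_pow_mul_rpow_neg_atTop 1 hc).const_mul (2 * a / c - 2 / c ^ 2))).add
    ((tendsto_log_pow_mul_rpow_neg_atTop 0 hc).const_mul (-(a ^ 2 / c) + 2 * a / c ^ 2 - 2 / c ^ 3))
  simp only [mul_zero, add_zero] at h
  refine h.congr fun x => ?_
  simp only [logSubSqMulRpowPrimitive]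
  ring

theorem integral_Ioi_one_log_sub_sq_mul_rpow (hc : 0 < c) :
    ∫ x in Set.Ioi (1 : ℝ), (log x - a) ^ 2 * x ^ (-(c + 1))
      = a ^ 2 / c - 2 * a / c ^ 2 + 2 / c ^ 3 := by
  have hderiv : ∀ x ∈ Set.Ioi (1 : ℝ), HasDerivAt (logSubSqMulRpowPrimitive a c)
      ((log x - a) ^ 2 * x ^ (-(c + 1))) x := fun x hx =>
    hasDerivAt_logSubSqMulRpowPrimitive hc.ne' (one_pos.trans hx)
  have hnonneg : ∀ x ∈ Set.Ioi (1 : ℝ), 0 ≤ (log x - a) ^ 2 * x ^ (-(c + 1)) := fun x hx =>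
    mul_nonneg (sq_nonneg _) (rpow_nonneg (one_pos.trans hx).le _)
  rw [integral_Ioi_of_hasDerivAt_of_nonneg
    (hasDerivAt_logSubSqMulRpowPrimitive hc.ne' one_pos).continuousAt.continuousWithinAt
    hderiv hnonneg (tendsto_logSubSqMulRpowPrimitive_atTop hc)]
  simp only [logSubSqMulRpowPrimitive, log_one, one_rpow]
  ring

end LogSqPrimitive

lemma pareto_score_sq_mul_density_rpow {γ : ℝ} (hγ : 0 < γ) (α : ℝ) {x : ℝ} (hx : 0 < x) :
    (1 / γ ^ 3 * ((log x - γ) / x ^ (1 + 1 / γ))) ^ 2 * (γ⁻¹ * x ^ (-1 - 1 / γ)) ^ (α - 1)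
      = (γ ^ 6 * γ ^ (α - 1))⁻¹ * ((log x - γ) ^ 2 * x ^ (-((α * (1 + γ) + 1) / γ + 1))) := by
  have hexp : x ^ (-((α * (1 + γ) + 1) / γ + 1))
      = x ^ ((-1 - 1 / γ) * (α - 1)) / (x ^ (1 + 1 / γ)) ^ 2 := by
    rw [← rpow_mul_natCast hx.le, ← rpow_sub hx]
    congr 1
    field_simp
    ring
  rw [mul_rpow (inv_nonneg.2 hγ.le) (rpow_nonneg hx.le _), inv_rpow hγ.le, ← rpow_mul hx.le, hexp]
  field_simp

/-- The constant η* is positive and equals the weighted squared-score integral. -/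
theorem eta_star_positive_and_integral (γ α : ℝ) (hγ : 0 < γ) (hα : 0 < α) :
    0 < (1 + α) / γ ^ (2 + α) * ((α ^ 2 * (1 + γ) ^ 2 + 1) / (α * (1 + γ) + 1) ^ 3)
    ∧ (1 + α) / γ ^ (2 + α) * ((α ^ 2 * (1 + γ) ^ 2 + 1) / (α * (1 + γ) + 1) ^ 3)
      = (1 + α) * ∫ x in Set.Ioi (1 : ℝ),
          (1 / γ ^ 3 * ((Real.log x - γ) / x ^ (1 + 1 / γ))) ^ 2 *
            (γ⁻¹ * x ^ (-1 - 1 / γ)) ^ (α - 1) := by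
  refine ⟨by positivity, ?_⟩
  have hc : 0 < (α * (1 + γ) + 1) / γ := by positivity
  rw [setIntegral_congr_fun measurableSet_Ioi
      fun x hx => pareto_score_sq_mul_density_rpow hγ α (one_pos.trans hx),
    integral_const_mul, integral_Ioi_one_log_sub_sq_mul_rpow hc,
    show (2 : ℝ) + α = α - 1 + 3 by ring, rpow_add hγ, rpow_ofNat]
  have := rpow_pos_of_pos hγ (α - 1)
  field_simp
  ring
end

section
/- For α > 0 and densities f, ℓ on ℝ (nonnegative, measurable, both f^{1+α} and ℓ^{1+α} integrable and ℓ^α f integrable), the density power divergence d_α(f,ℓ) := ∫ [ℓ^{1+α} − (1+1/α) ℓ^α f + (1/α) f^{1+α}] dx is nonnegative, with equality to zero when f = ℓ almost everywhere. -/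
open Real MeasureTheory

/-- Nonnegativity of the density power divergence of Basu et al. (1998),
and vanishing when f = ℓ almost everywhere. -/
theorem density_power_divergence_nonneg (α : ℝ) (hα : 0 < α)
    (f ℓ : ℝ → ℝ) (hf : ∀ x, 0 ≤ f x) (hℓ : ∀ x, 0 ≤ ℓ x)
    (hfm : Measurable f) (hℓm : Measurable ℓ)
    (hfi : Integrable (fun x => f x ^ (1 + α)))
    (hℓi : Integrable (fun x => ℓ x ^ (1 + α)))
    (hmix : Integrable (fun x => ℓ x ^ α * f x)) :
    0 ≤ ∫ x, (ℓ x ^ (1 + α) - (1 + 1 / α) * ℓ x ^ α * f x + (1 / α) * f x ^ (1 + α))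
    ∧ (f =ᵐ[volume] ℓ →
        ∫ x, (ℓ x ^ (1 + α) - (1 + 1 / α) * ℓ x ^ α * f x + (1 / α) * f x ^ (1 + α))
          = 0) := by
  have hα1 : (0:ℝ) < 1 + α := by linarith
  have key : ∀ x, 0 ≤ ℓ x ^ (1 + α) - (1 + 1 / α) * ℓ x ^ α * f x
      + (1 / α) * f x ^ (1 + α) := by
    intro x
    set L := ℓ x with hL
    set F := f x with hF
    have hL0 : 0 ≤ L := hℓ x
    have hF0 : 0 ≤ F := hf x
    have hw : α / (1 + α) + 1 / (1 + α) = 1 := by field_simp; ring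
    have hgm := Real.geom_mean_le_arith_mean2_weighted
      (div_nonneg hα.le hα1.le) (div_nonneg zero_le_one hα1.le)
      (Real.rpow_nonneg hL0 (1 + α)) (Real.rpow_nonneg hF0 (1 + α)) hw
    have h1 : (L ^ (1 + α)) ^ (α / (1 + α)) = L ^ α := by
      rw [← Real.rpow_mul hL0]
      congr 1
      field_simp
    have h2 : (F ^ (1 + α)) ^ (1 / (1 + α)) = F := by
      rw [← Real.rpow_mul hF0, mul_one_div, div_self (ne_of_gt hα1), Real.rpow_one]
    rw [h1, h2] at hgm
    have hmul : (1 + 1 / α) * (L ^ α * F) ≤ (1 + 1 / α) *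
        (α / (1 + α) * L ^ (1 + α) + 1 / (1 + α) * F ^ (1 + α)) := by
      apply mul_le_mul_of_nonneg_left hgm
      positivity
    have hco : (1 + 1 / α) * (α / (1 + α)) = 1 := by field_simp; ring
    have hco2 : (1 + 1 / α) * (1 / (1 + α)) = 1 / α := by field_simp; ring
    have hfin : (1 + 1 / α) * (L ^ α * F) ≤ L ^ (1 + α) + 1 / α * F ^ (1 + α) := by
      calc (1 + 1 / α) * (L ^ α * F) ≤ (1 + 1 / α) *
          (α / (1 + α) * L ^ (1 + α) + 1 / (1 + α) * F ^ (1 + α)) := hmul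
        _ = (1 + 1 / α) * (α / (1 + α)) * L ^ (1 + α)
            + (1 + 1 / α) * (1 / (1 + α)) * F ^ (1 + α) := by ring
        _ = L ^ (1 + α) + 1 / α * F ^ (1 + α) := by rw [hco, hco2]; ring
    have : (1 + 1 / α) * L ^ α * F = (1 + 1 / α) * (L ^ α * F) := by ring
    linarith [hfin]
  constructor
  · exact integral_nonneg key
  · intro hfe
    have : (fun x => ℓ x ^ (1 + α) - (1 + 1 / α) * ℓ x ^ α * f x
        + (1 / α) * f x ^ (1 + α)) =ᵐ[volume] (fun _ => (0:ℝ)) := by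
      filter_upwards [hfe] with x hx
      rcases eq_or_lt_of_le (hℓ x) with h0 | hpos
      · simp [hx, ← h0, Real.zero_rpow (ne_of_gt hα1), Real.zero_rpow (ne_of_gt hα)]
      · have : ℓ x ^ α * ℓ x = ℓ x ^ (1 + α) := by
          rw [add_comm, Real.rpow_add hpos, Real.rpow_one]
        rw [hx]
        rw [mul_assoc, this]
        field_simp
        ring
    rw [integral_congr_ae this, integral_zero]
end
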